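/- arXiv:2605.20854 — 3 statements merged into one kernel-verified Lean document; each statement's English description precedes it below -/
import Mathlib

section
/- Let K ≥ 1 and M ≥ 2 be integers, and let Π be a probability measure on ℝ^K such that θ ↦ max_{i∈[K]} |θ_i| is Π-integrable. Define the polynomial function J on ℝ^K by J(π) := E_{θ∼Π}[ Σ_{a∈[K]^M} (∏_{m=1}^M π_{a_m}) · max_{m∈[M]} θ_{a_m} ]. Then for every π in the probability simplex Δ^{K-1} and every arm i, the partial derivative of J with respect to π_i satisfies ∂J(π)/∂π_i = M · ( s̄_i(π) + C(π) ), where s̄_i(π) := E_{θ∼Π}[ Σ_{a∈[K]^{M−1}} (∏_{m=1}^{M−1} π_{a_m}) · max(θ_i − max_{m∈[M−1]} θ_{a_m}, 0) ] and C(π) := E_{θ∼Π}[ Σ_{a∈[K]^{M−1}} (∏_{m=1}^{M−1} π_{a_m}) · max_{m∈[M−1]} θ_{a_m} ]. -/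
open MeasureTheory

/-- The ReMax objective as a polynomial function of `π` on `ℝ^K`: the posterior expected
maximum reward over `M` virtual draws from `π`, where repeated occurrences of the same
arm reuse the same posterior sample. -/
noncomputable def remaxJ (K M : ℕ) (P : Measure (Fin K → ℝ)) (π : Fin K → ℝ) : ℝ :=
  ∫ θ, ∑ a : Fin M → Fin K, (∏ m, π (a m)) * (⨆ m, θ (a m)) ∂P

/-- The posterior-averaged marginal expected improvement of arm `i`. -/
noncomputable def remaxSbar (K M : ℕ) (P : Measure (Fin K → ℝ)) (π : Fin K → ℝ)
    (i : Fin K) : ℝ :=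
  ∫ θ, ∑ a : Fin (M - 1) → Fin K,
      (∏ m, π (a m)) * max (θ i - ⨆ m, θ (a m)) 0 ∂P

/-- The arm-independent constant: posterior-averaged expected maximum over `M - 1` draws. -/
noncomputable def remaxC (K M : ℕ) (P : Measure (Fin K → ℝ)) (π : Fin K → ℝ) : ℝ :=
  ∫ θ, ∑ a : Fin (M - 1) → Fin K,
      (∏ m, π (a m)) * (⨆ m, θ (a m)) ∂P

/-!
`J` is the polynomial `∑ₐ (∏ₘ π (a m)) c(a)` with `c(a) = E[maxₘ θ (a m)]`. Differentiating in `π i`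
selects a position `m` with `a m = i`; writing `a = insertNth m i b`, the remaining weight is
`∏ⱼ π (b j)` and `c(a) = E[max (θ i) (maxⱼ θ (b j))]`, which does not depend on `m`, so the
derivative is `M` copies of one sum over `b`. Finally `max x s = max (x - s) 0 + s` splits that
sum into `s̄ᵢ(π) + C(π)`.
-/

open Finset Function

theorem Fin.prod_univ_erase_eq_prod_succAbove {M₀ : Type*} [CommMonoid M₀] {n : ℕ}
    (f : Fin (n + 1) → M₀) (m : Fin (n + 1)) :
    ∏ m' ∈ univ.erase m, f m' = ∏ j, f (m.succAbove j) := by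
  rw [← compl_singleton, ← Fin.image_succAbove_univ,
    prod_image fun _ _ _ _ h => m.succAbove_right_injective h]

theorem Fin.ciSup_eq_max_ciSup_succAbove {α : Type*} [ConditionallyCompleteLinearOrder α]
    {n : ℕ} [Nonempty (Fin n)] (f : Fin (n + 1) → α) (m : Fin (n + 1)) :
    ⨆ m', f m' = max (f m) (⨆ j, f (m.succAbove j)) := by
  have bdd : BddAbove (Set.range f) := (Set.finite_range f).bddAbove
  have bdd' : BddAbove (Set.range fun j => f (m.succAbove j)) := (Set.finite_range _).bddAbove
  apply le_antisymm
  · refine ciSup_le fun m' => ?_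
    rcases eq_or_ne m' m with rfl | h
    · exact le_max_left _ _
    · obtain ⟨j, rfl⟩ := Fin.exists_succAbove_eq h
      exact (le_ciSup bdd' j).trans (le_max_right _ _)
  · exact max_le (le_ciSup bdd m) (ciSup_le fun j => le_ciSup bdd (m.succAbove j))

theorem Fin.sum_ite_apply_eq_sum_insertNth {ι R : Type*} [Fintype ι] [DecidableEq ι]
    [AddCommMonoid R] {n : ℕ} (m : Fin (n + 1)) (i : ι) (F : (Fin (n + 1) → ι) → R) :
    ∑ a, (if a m = i then F a else 0) = ∑ b : Fin n → ι, F (Fin.insertNth m i b) := by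
  rw [← (Fin.insertNthEquiv (fun _ => ι) m).sum_comp, Fintype.sum_prod_type, sum_comm]
  simp [Fin.insertNthEquiv]

section Polynomial

variable {ι : Type*} [DecidableEq ι] (π : ι → ℝ) (i : ι)

theorem hasDerivAt_prod_update {n : ℕ} (a : Fin n → ι) :
    HasDerivAt (fun t => ∏ m, update π i t (a m))
      (∑ m, if a m = i then ∏ m' ∈ univ.erase m, π (a m') else 0) (π i) := by
  have hcoord : ∀ m, HasDerivAt (fun t => update π i t (a m))
      (if a m = i then 1 else 0) (π i) := fun m => by
    rcases eq_or_ne (a m) i with h | h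
    · simpa [update_apply, h] using hasDerivAt_id' (π i)
    · simpa [update_apply, h] using hasDerivAt_const (π i) (π (a m))
  simpa [update_eq_self] using HasDerivAt.fun_finsetProd fun m (_ : m ∈ univ) => hcoord m

theorem hasDerivAt_sum_prod_update [Fintype ι] {n : ℕ} (c : (Fin (n + 1) → ι) → ℝ) :
    HasDerivAt (fun t => ∑ a : Fin (n + 1) → ι, (∏ m, update π i t (a m)) * c a)
      (∑ m, ∑ b : Fin n → ι, (∏ j, π (b j)) * c (Fin.insertNth m i b)) (π i) := by
  refine (HasDerivAt.fun_sum fun a (_ : a ∈ univ) =>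
    (hasDerivAt_prod_update π i a).mul_const (c a)).congr_deriv ?_
  simp only [sum_mul, ite_mul, zero_mul]
  rw [sum_comm]
  refine sum_congr rfl fun m _ => ?_
  rw [Fin.sum_ite_apply_eq_sum_insertNth]
  refine sum_congr rfl fun b _ => ?_
  rw [Fin.prod_univ_erase_eq_prod_succAbove]
  simp [Fin.insertNth_apply_succAbove]

end Polynomial

theorem integral_sum_mul {α ι : Type*} [MeasurableSpace α] {μ : Measure α} [Fintype ι]
    (w : ι → ℝ) {f : ι → α → ℝ} (hf : ∀ a, Integrable (f a) μ) :
    ∫ x, ∑ a, w a * f a x ∂μ = ∑ a, w a * ∫ x, f a x ∂μ := by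
  rw [integral_finsetSum _ fun a _ => (hf a).const_mul (w a)]
  simp only [integral_const_mul]

theorem abs_ciSup_comp_le {ι κ : Type*} [Finite ι] [Finite κ] [Nonempty κ]
    (θ : ι → ℝ) (a : κ → ι) : |⨆ m, θ (a m)| ≤ ⨆ j, |θ j| := by
  have bdd : BddAbove (Set.range fun m => θ (a m)) := (Set.finite_range _).bddAbove
  have bddAbs : BddAbove (Set.range fun j => |θ j|) := (Set.finite_range _).bddAbove
  refine abs_le.2 ⟨?_, ciSup_le fun m => (le_abs_self _).trans (le_ciSup bddAbs (a m))⟩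
  obtain ⟨m₀⟩ := ‹Nonempty κ›
  calc -(⨆ j, |θ j|) ≤ -|θ (a m₀)| := neg_le_neg (le_ciSup bddAbs (a m₀))
    _ ≤ θ (a m₀) := neg_abs_le _
    _ ≤ ⨆ m, θ (a m) := le_ciSup bdd m₀

section Posterior

variable {ι : Type*} {P : Measure (ι → ℝ)}

theorem integral_ciSup_insertNth {n : ℕ} [Nonempty (Fin n)] (m : Fin (n + 1)) (i : ι)
    (b : Fin n → ι) :
    ∫ θ, ⨆ m', θ (Fin.insertNth (α := fun _ => ι) m i b m') ∂P =
      ∫ θ, max (θ i) (⨆ j, θ (b j)) ∂P := by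
  congr with θ
  simp [Fin.ciSup_eq_max_ciSup_succAbove _ m, Fin.insertNth_apply_succAbove]

variable [Finite ι] (hInt : Integrable (fun θ : ι → ℝ => ⨆ i, |θ i|) P)
include hInt

theorem integrable_ciSup_apply {κ : Type*} [Finite κ] [Nonempty κ] (a : κ → ι) :
    Integrable (fun θ : ι → ℝ => ⨆ m, θ (a m)) P := by
  refine hInt.mono (Measurable.iSup fun m => measurable_pi_apply (a m)).aestronglyMeasurable
    (ae_of_all _ fun θ => ?_)
  rw [Real.norm_eq_abs, Real.norm_eq_abs]
  exact (abs_ciSup_comp_le θ a).trans (le_abs_self _)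

theorem integrable_apply (i : ι) : Integrable (fun θ : ι → ℝ => θ i) P := by
  simpa using integrable_ciSup_apply hInt fun _ : Unit => i

end Posterior

section Remax

variable {K : ℕ} {P : Measure (Fin K → ℝ)}
  (hInt : Integrable (fun θ : Fin K → ℝ => ⨆ i, |θ i|) P) (π : Fin K → ℝ)
include hInt

theorem remaxJ_eq_sum {M : ℕ} [Nonempty (Fin M)] :
    remaxJ K M P π = ∑ a : Fin M → Fin K, (∏ m, π (a m)) * ∫ θ, ⨆ m, θ (a m) ∂P :=
  integral_sum_mul _ fun a => integrable_ciSup_apply hInt a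

theorem remaxSbar_add_remaxC {n : ℕ} [Nonempty (Fin n)] (i : Fin K) :
    remaxSbar K (n + 1) P π i + remaxC K (n + 1) P π =
      ∑ b : Fin n → Fin K, (∏ j, π (b j)) * ∫ θ, max (θ i) (⨆ j, θ (b j)) ∂P := by
  have hsup (b : Fin n → Fin K) := integrable_ciSup_apply hInt b
  have hpos (b : Fin n → Fin K) : Integrable (fun θ => max (θ i - ⨆ j, θ (b j)) 0) P :=
    ((integrable_apply hInt i).sub (hsup b)).pos_part
  -- `Fin (n + 1 - 1)` in the definitions is `Fin n` only up to defeq, which blocks `rw`.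
  refine (congrArg₂ (· + ·) (integral_sum_mul _ hpos) (integral_sum_mul _ hsup)).trans ?_
  rw [← sum_add_distrib]
  refine sum_congr rfl fun b _ => ?_
  rw [← mul_add, ← integral_add (hpos b) (hsup b)]
  congr with θ
  rw [← max_add_add_right, sub_add_cancel, zero_add]

end Remax

theorem remax_partial_derivative_general
    (K M : ℕ) (hM : 2 ≤ M)
    (P : Measure (Fin K → ℝ))
    (hInt : Integrable (fun θ : Fin K → ℝ => ⨆ i, |θ i|) P)
    (π : Fin K → ℝ) (i : Fin K) :
    HasDerivAt (fun t : ℝ => remaxJ K M P (Function.update π i t))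
      ((M : ℝ) * (remaxSbar K M P π i + remaxC K M P π)) (π i) := by
  obtain ⟨n, rfl⟩ : ∃ n, M = n + 1 := ⟨M - 1, by omega⟩
  have : Nonempty (Fin n) := Fin.pos_iff_nonempty.1 (by omega)
  have hJ : (fun t => remaxJ K (n + 1) P (update π i t)) =
      fun t => ∑ a : Fin (n + 1) → Fin K, (∏ m, update π i t (a m)) * ∫ θ, ⨆ m, θ (a m) ∂P :=
    funext fun t => remaxJ_eq_sum hInt _
  rw [hJ, remaxSbar_add_remaxC hInt]
  refine (hasDerivAt_sum_prod_update π i _).congr_deriv ?_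
  simp only [integral_ciSup_insertNth, sum_const, card_univ, Fintype.card_fin, nsmul_eq_mul]

/-- The partial derivative of the ReMax objective with respect to `π i` equals
`M · (s̄_i(π) + C(π))`. -/
theorem remax_partial_derivative
    (K M : ℕ) (hK : 1 ≤ K) (hM : 2 ≤ M)
    (P : Measure (Fin K → ℝ)) [IsProbabilityMeasure P]
    (hInt : Integrable (fun θ : Fin K → ℝ => ⨆ i, |θ i|) P)
    (π : Fin K → ℝ) (hπ0 : ∀ i, 0 ≤ π i) (hπ1 : ∑ i, π i = 1) (i : Fin K) :
    HasDerivAt (fun t : ℝ => remaxJ K M P (Function.update π i t))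
      ((M : ℝ) * (remaxSbar K M P π i + remaxC K M P π)) (π i) :=
  remax_partial_derivative_general K M hM P hInt π i
end

section
/- Let K ≥ 2 and let θ_1, …, θ_K be independent Gaussian random variables with θ_i ∼ N(μ̂_i, 1/N_i) for integers N_i ≥ 1. Let π maximize the M=2 ReMax objective J(π) = Σ_{i,j} π_i π_j E[max(θ_i, θ_j)] (with the diagonal convention E[max(θ_i, θ_i)] = μ̂_i) over the probability simplex Δ^{K-1}. Fix ε > 0, μ₁ ∈ ℝ, and an integer n ≥ 1 with N_1 = n and μ̂_1 ≤ μ₁ − ε. Define E := (1/4)·E_{θ₁∼N(μ̂_1, 1/n)}[ max(θ_1 − (μ₁ − ε), 0) ], S := { i ∈ [K] : N_i ≥ max(4/(πE²), n+1) }, H := { i ∈ S : i ≠ 1 and μ̂_i > μ₁ − ε }, and L := max_{i∈[K]} μ̂_i − min_{i∈[K]} μ̂_i. If Σ_{i∈H} π_i < 1/4, then Σ_{j∉S} π_j ≥ min( 1/4, E/(2(L+1)) ). -/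
open MeasureTheory ProbabilityTheory
open scoped NNReal Classical

/-- The joint posterior: independent Gaussian coordinates `θ_i ∼ N(μ̂_i, 1/N_i)`. -/
noncomputable def gaussPosterior (K : ℕ) (μhat : Fin K → ℝ) (N : Fin K → ℕ) :
    Measure (Fin K → ℝ) :=
  Measure.pi fun i => gaussianReal (μhat i) ((N i : ℝ≥0))⁻¹

/-- The `M = 2` ReMax objective `J(π) = Σ_{i,j} π_i π_j E[max(θ_i, θ_j)]`, where a
repeated draw of the same arm reuses the same posterior sample (so the diagonal term is
`E[θ_i] = μ̂_i`). -/
noncomputable def remaxJ2 (K : ℕ) (μhat : Fin K → ℝ) (N : Fin K → ℕ)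
    (π : Fin K → ℝ) : ℝ :=
  ∫ θ, ∑ i, ∑ j, π i * π j * max (θ i) (θ j) ∂(gaussPosterior K μhat N)

/-!
Write `G i j = E[max(θ_i, θ_j)]`, so that `J(π) = πᵀ G π` with `G` symmetric; first-order
optimality of `π` on the simplex gives `(G π)_1 ≤ (G π)_j` for every arm `j` in the support of `π`.

Suppose the mass outside `S` is below `1/4`. Then the arms of `S \ H` carry more than half of the
mass; let `j` be the one of least posterior mean among those in the support of `π`, and compare
row `1` with row `j` of `G`. A sufficiently sampled arm has posterior spread at most `E`, so
`E[(θ_k - μ̂_k)⁺] ≤ E/2`. For `k ∈ S \ H` (so `μ̂_j ≤ μ̂_k ≤ c := μ₁ - ε`) the inequality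
`max(x, y) ≥ y + (x - c)⁺ - (y - c)⁺` gives `G 1 k ≥ μ̂_k + 4E - E/2`, while `G j k ≤ μ̂_k + E`;
for `k ∈ H` the loss `G j k - G 1 k` is at most `E`, and for every other arm at most `L + 1`.
Summing against `π` gives `(L + 1) π(Sᶜ) ≥ E`.
-/

open Filter Topology Matrix Finset

theorem nonpos_of_forall_mul_add_sq_mul_nonpos {D C t₀ : ℝ} (ht₀ : 0 < t₀)
    (h : ∀ t ∈ Set.Ioc 0 t₀, t * D + t ^ 2 * C ≤ 0) : D ≤ 0 := by
  have hlim : Tendsto (fun t : ℝ => D + t * C) (𝓝[>] 0) (𝓝 D) :=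
    (Continuous.tendsto' (by fun_prop) 0 D (by simp)).mono_left nhdsWithin_le_nhds
  refine le_of_tendsto hlim ?_
  filter_upwards [Ioo_mem_nhdsGT ht₀] with t ht
  have := h t (Set.Ioo_subset_Ioc_self ht)
  nlinarith [ht.1]

/-- Moving mass `t` from `b` to `a` changes the quadratic form by
`2 t ((A p)_a - (A p)_b) + O(t²)`. -/
theorem Matrix.IsSymm.mulVec_apply_le_of_isMaxOn_stdSimplex {ι : Type*} [Fintype ι]
    [DecidableEq ι] {A : Matrix ι ι ℝ} (hA : A.IsSymm) {p : ι → ℝ} (hps : p ∈ stdSimplex ℝ ι)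
    (hp : IsMaxOn (fun q => q ⬝ᵥ A *ᵥ q) (stdSimplex ℝ ι) p) (a : ι) {b : ι} (hb : 0 < p b) :
    (A *ᵥ p) a ≤ (A *ᵥ p) b := by
  set d : ι → ℝ := Pi.single a 1 - Pi.single b 1
  have hmem : ∀ t ∈ Set.Ioc 0 (p b), p + t • d ∈ stdSimplex ℝ ι := by
    rintro t ⟨ht0, htb⟩
    refine ⟨fun k => ?_, by simp [d, sum_add_distrib, ← mul_sum, hps.2]⟩
    have hpk := hps.1 k
    have hsingle : 0 ≤ (Pi.single a 1 : ι → ℝ) k := by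
      rw [Pi.single_apply]; split_ifs <;> norm_num
    rcases eq_or_ne k b with rfl | hkb
    · simp only [d, Pi.add_apply, Pi.smul_apply, Pi.sub_apply, Pi.single_eq_same, smul_eq_mul]
      nlinarith
    · simp only [d, Pi.add_apply, Pi.smul_apply, Pi.sub_apply, Pi.single_eq_of_ne hkb,
        smul_eq_mul, sub_zero]
      positivity
  have hexpand : ∀ t : ℝ, (p + t • d) ⬝ᵥ A *ᵥ (p + t • d) =
      p ⬝ᵥ A *ᵥ p + t * (2 * ((A *ᵥ p) a - (A *ᵥ p) b)) + t ^ 2 * (d ⬝ᵥ A *ᵥ d) := by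
    intro t
    have hsymm : p ⬝ᵥ A *ᵥ d = d ⬝ᵥ A *ᵥ p := by
      rw [dotProduct_mulVec d, ← mulVec_transpose, hA.eq, dotProduct_comm]
    have hd : d ⬝ᵥ A *ᵥ p = (A *ᵥ p) a - (A *ᵥ p) b := by
      simp [d, sub_dotProduct]
    simp only [mulVec_add, mulVec_smul, dotProduct_add, add_dotProduct, dotProduct_smul,
      smul_dotProduct, smul_eq_mul, hsymm, hd]
    ring
  have := nonpos_of_forall_mul_add_sq_mul_nonpos (D := 2 * ((A *ᵥ p) a - (A *ᵥ p) b))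
    (C := d ⬝ᵥ A *ᵥ d) hb fun t ht => by
      have := hp (hmem t ht)
      simp only [Set.mem_ofPred_eq, hexpand] at this
      linarith
  linarith

theorem sum_eq_sum_univ_sdiff_add_sum_sdiff_add_sum {ι : Type*} [Fintype ι] [DecidableEq ι]
    {S H : Finset ι} (hHS : H ⊆ S) (f : ι → ℝ) :
    ∑ k, f k = ∑ k ∈ univ \ S, f k + ∑ k ∈ S \ H, f k + ∑ k ∈ H, f k := by
  rw [add_assoc, sum_sdiff hHS, sum_sdiff (subset_univ S)]

theorem le_sum_mul_of_le_on_parts {ι : Type*} [Fintype ι] [DecidableEq ι] {S H : Finset ι}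
    (hHS : H ⊆ S) {p d : ι → ℝ} (hp : ∀ k, 0 ≤ p k) {a b c : ℝ}
    (ha : ∀ k ∈ S \ H, 0 < p k → a ≤ d k) (hb : ∀ k ∈ H, b ≤ d k) (hc : ∀ k ∉ S, c ≤ d k) :
    c * ∑ k ∈ univ \ S, p k + a * ∑ k ∈ S \ H, p k + b * ∑ k ∈ H, p k ≤ ∑ k, p k * d k := by
  rw [sum_eq_sum_univ_sdiff_add_sum_sdiff_add_sum hHS, mul_sum, mul_sum, mul_sum]
  refine add_le_add (add_le_add ?_ ?_) ?_ <;> refine sum_le_sum fun k hk => ?_ <;>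
    rw [mul_comm]
  · exact mul_le_mul_of_nonneg_left (hc k (mem_sdiff.1 hk).2) (hp k)
  · rcases (hp k).eq_or_lt with h0 | hpos
    · simp [← h0]
    · exact mul_le_mul_of_nonneg_left (ha k hk hpos) (hp k)
  · exact mul_le_mul_of_nonneg_left (hb k hk) (hp k)

section ExpectedMax

variable {Ω : Type*} [MeasurableSpace Ω] {μ : Measure Ω} {X Y : Ω → ℝ}

theorem max_integral_le_integral_max (hX : Integrable X μ) (hY : Integrable Y μ) :
    max (∫ ω, X ω ∂μ) (∫ ω, Y ω ∂μ) ≤ ∫ ω, max (X ω) (Y ω) ∂μ :=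
  max_le (integral_mono hX (hX.sup hY) fun _ => le_max_left _ _)
    (integral_mono hY (hX.sup hY) fun _ => le_max_right _ _)

theorem integral_max_le_max_add [IsProbabilityMeasure μ] (hX : Integrable X μ)
    (hY : Integrable Y μ) (a b : ℝ) :
    ∫ ω, max (X ω) (Y ω) ∂μ ≤
      max a b + ∫ ω, max (X ω - a) 0 ∂μ + ∫ ω, max (Y ω - b) 0 ∂μ := by
  have hXa : Integrable (fun ω => max (X ω - a) 0) μ := (hX.sub (integrable_const a)).pos_part
  have hYb : Integrable (fun ω => max (Y ω - b) 0) μ := (hY.sub (integrable_const b)).pos_part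
  calc ∫ ω, max (X ω) (Y ω) ∂μ
      ≤ ∫ ω, (max a b + max (X ω - a) 0 + max (Y ω - b) 0) ∂μ :=
        integral_mono (hX.sup hY) (((integrable_const _).add hXa).add hYb) fun ω => by
          simp only [max_def]; split_ifs <;> linarith
    _ = _ := by
        rw [integral_add (f := fun ω => max a b + max (X ω - a) 0)
            ((integrable_const _).add hXa) hYb,
          integral_add (integrable_const _) hXa, integral_const, probReal_univ, one_smul]

theorem integral_add_integral_max_sub_le_integral_max [IsFiniteMeasure μ]
    (hX : Integrable X μ) (hY : Integrable Y μ) (c : ℝ) :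
    ∫ ω, Y ω ∂μ + ∫ ω, max (X ω - c) 0 ∂μ - ∫ ω, max (Y ω - c) 0 ∂μ ≤
      ∫ ω, max (X ω) (Y ω) ∂μ := by
  have hXc : Integrable (fun ω => max (X ω - c) 0) μ := (hX.sub (integrable_const c)).pos_part
  have hYc : Integrable (fun ω => max (Y ω - c) 0) μ := (hY.sub (integrable_const c)).pos_part
  rw [← integral_add hY hXc,
    ← integral_sub (f := fun ω => Y ω + max (X ω - c) 0) (hY.add hXc) hYc]
  exact integral_mono ((hY.add hXc).sub hYc) (hX.sup hY) fun ω => by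
    simp only [max_def]; split_ifs <;> linarith

/-- `E[(X - EX)⁺] = E|X - EX| / 2`, and `(E|X - EX|)² ≤ Var X` because `Var |X - EX| ≥ 0`. -/
theorem integral_max_sub_integral_zero_le [IsProbabilityMeasure μ] (hX : MemLp X 2 μ) :
    ∫ ω, max (X ω - μ[X]) 0 ∂μ ≤ √(Var[X; μ]) / 2 := by
  set Z : Ω → ℝ := fun ω => X ω - μ[X]
  have hZ : MemLp Z 2 μ := hX.sub (memLp_const _)
  have hZint : Integrable Z μ := hZ.integrable one_le_two
  have hZ0 : ∫ ω, Z ω ∂μ = 0 := by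
    simp [Z, integral_sub (hX.integrable one_le_two) (integrable_const _)]
  have hsq : (∫ ω, |Z ω| ∂μ) ^ 2 ≤ Var[X; μ] := by
    have := variance_nonneg |Z| μ
    rw [variance_eq_sub hZ.abs] at this
    rw [variance_eq_integral hX.aemeasurable]
    simpa [sq_abs] using this
  have hpos : ∫ ω, max (Z ω) 0 ∂μ = (∫ ω, |Z ω| ∂μ) / 2 := by
    have : ∀ ω, max (Z ω) 0 = (|Z ω| + Z ω) / 2 := fun ω => by
      rcases le_total (Z ω) 0 with h | h <;> simp [h, abs_of_nonpos, abs_of_nonneg]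
    simp_rw [this, integral_div, integral_add hZint.abs hZint, hZ0, add_zero]
  rw [hpos]
  gcongr
  exact Real.le_sqrt_of_sq_le hsq

end ExpectedMax

section Gaussian

variable {m : ℝ} {v : ℝ≥0}

theorem integrable_max_sub_zero_gaussianReal (c : ℝ) :
    Integrable (fun x => max (x - c) 0) (gaussianReal m v) :=
  ((memLp_id_gaussianReal 1).integrable le_rfl |>.sub (integrable_const c)).pos_part

theorem integral_max_sub_zero_gaussianReal_le {c : ℝ} (hmc : m ≤ c) :
    ∫ x, max (x - c) 0 ∂gaussianReal m v ≤ √(v : ℝ) / 2 := by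
  have h := integral_max_sub_integral_zero_le (memLp_id_gaussianReal (μ := m) (v := v) 2)
  rw [variance_id_gaussianReal] at h
  simp only [id, integral_id_gaussianReal] at h
  refine le_trans (integral_mono (integrable_max_sub_zero_gaussianReal c)
    (integrable_max_sub_zero_gaussianReal m) fun x => ?_) h
  exact max_le_max (by linarith) le_rfl

theorem integral_max_sub_zero_gaussianReal_pos (hv : v ≠ 0) (c : ℝ) :
    0 < ∫ x, max (x - c) 0 ∂gaussianReal m v := by
  rw [integral_pos_iff_support_of_nonneg (f := fun x => max (x - c) 0)
    (fun x => le_max_right _ _) (integrable_max_sub_zero_gaussianReal c)]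
  have hsupp : Function.support (fun x : ℝ => max (x - c) 0) = Set.Ioi c := by
    ext x; simp
  rw [hsupp, pos_iff_ne_zero]
  exact fun h => by simpa using gaussianReal_absolutelyContinuous' m hv h

end Gaussian

noncomputable def pairMaxMatrix {ι : Type*} (P : Measure (ι → ℝ)) : Matrix ι ι ℝ :=
  Matrix.of fun i j => ∫ θ, max (θ i) (θ j) ∂P

theorem pairMaxMatrix_isSymm {ι : Type*} (P : Measure (ι → ℝ)) : (pairMaxMatrix P).IsSymm := by
  ext i j
  simp only [pairMaxMatrix, transpose_apply, of_apply, max_comm]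

section Posterior

variable {K : ℕ} {μhat : Fin K → ℝ} {N : Fin K → ℕ}

instance : IsProbabilityMeasure (gaussPosterior K μhat N) := by
  unfold gaussPosterior; infer_instance

theorem measurePreserving_eval_gaussPosterior (i : Fin K) :
    MeasurePreserving (Function.eval i) (gaussPosterior K μhat N)
      (gaussianReal (μhat i) (N i : ℝ≥0)⁻¹) :=
  measurePreserving_eval _ i

theorem integral_comp_eval_gaussPosterior (i : Fin K) {f : ℝ → ℝ}
    (hf : AEStronglyMeasurable f (gaussianReal (μhat i) (N i : ℝ≥0)⁻¹)) :
    ∫ θ, f (θ i) ∂gaussPosterior K μhat N = ∫ x, f x ∂gaussianReal (μhat i) (N i : ℝ≥0)⁻¹ := by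
  have hmp := measurePreserving_eval_gaussPosterior (μhat := μhat) (N := N) i
  rw [← hmp.map_eq] at hf ⊢
  exact (integral_map hmp.measurable.aemeasurable hf).symm

theorem integrable_eval_gaussPosterior (i : Fin K) :
    Integrable (fun θ : Fin K → ℝ => θ i) (gaussPosterior K μhat N) :=
  (measurePreserving_eval_gaussPosterior i).integrable_comp_of_integrable
    ((memLp_id_gaussianReal 1).integrable le_rfl)

theorem integral_eval_gaussPosterior (i : Fin K) :
    ∫ θ, θ i ∂gaussPosterior K μhat N = μhat i := by
  rw [integral_comp_eval_gaussPosterior i (f := fun x => x) aestronglyMeasurable_id,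
    integral_id_gaussianReal]

theorem integral_max_sub_zero_gaussPosterior_le {i : Fin K} {c : ℝ} (hc : μhat i ≤ c) :
    ∫ θ, max (θ i - c) 0 ∂gaussPosterior K μhat N ≤ √(N i : ℝ)⁻¹ / 2 := by
  rw [integral_comp_eval_gaussPosterior i (f := fun x => max (x - c) 0) (by fun_prop)]
  simpa using integral_max_sub_zero_gaussianReal_le (v := (N i : ℝ≥0)⁻¹) hc

theorem remaxJ2_eq_dotProduct_mulVec (q : Fin K → ℝ) :
    remaxJ2 K μhat N q = q ⬝ᵥ pairMaxMatrix (gaussPosterior K μhat N) *ᵥ q := by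
  have hint : ∀ i j, Integrable (fun θ : Fin K → ℝ => max (θ i) (θ j))
      (gaussPosterior K μhat N) :=
    fun i j => (integrable_eval_gaussPosterior i).sup (integrable_eval_gaussPosterior j)
  simp only [remaxJ2, dotProduct, mulVec, pairMaxMatrix, of_apply, mul_sum]
  rw [integral_finsetSum _ fun i _ => integrable_finsetSum _ fun j _ => (hint i j).const_mul _]
  refine sum_congr rfl fun i _ => ?_
  rw [integral_finsetSum _ fun j _ => (hint i j).const_mul _]
  refine sum_congr rfl fun j _ => ?_
  rw [integral_const_mul]
  ring

theorem pairMaxMatrix_gaussPosterior_sub_ge (i j k : Fin K) :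
    min (μhat k - μhat j) 0 - (√(N j : ℝ)⁻¹ + √(N k : ℝ)⁻¹) / 2 ≤
      pairMaxMatrix (gaussPosterior K μhat N) i k -
        pairMaxMatrix (gaussPosterior K μhat N) j k := by
  have hlow := (le_max_right _ _).trans (max_integral_le_integral_max
    (integrable_eval_gaussPosterior (μhat := μhat) (N := N) i) (integrable_eval_gaussPosterior k))
  have hup := integral_max_le_max_add (integrable_eval_gaussPosterior (μhat := μhat)
    (N := N) j) (integrable_eval_gaussPosterior k) (μhat j) (μhat k)
  simp only [integral_eval_gaussPosterior] at hlow
  have := integral_max_sub_zero_gaussPosterior_le (μhat := μhat) (N := N) (le_refl (μhat j))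
  have := integral_max_sub_zero_gaussPosterior_le (μhat := μhat) (N := N) (le_refl (μhat k))
  simp only [pairMaxMatrix, of_apply]
  rcases le_total (μhat j) (μhat k) with h | h
  · simp only [max_eq_right h, min_eq_right (sub_nonneg.2 h)] at *; linarith
  · simp only [max_eq_left h, min_eq_left (sub_nonpos.2 h)] at *; linarith

theorem pairMaxMatrix_gaussPosterior_sub_ge_of_le_of_le {i j k : Fin K} {c : ℝ}
    (hjk : μhat j ≤ μhat k) (hkc : μhat k ≤ c) :
    ∫ θ, max (θ i - c) 0 ∂gaussPosterior K μhat N - √(N j : ℝ)⁻¹ / 2 - √(N k : ℝ)⁻¹ ≤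
      pairMaxMatrix (gaussPosterior K μhat N) i k -
        pairMaxMatrix (gaussPosterior K μhat N) j k := by
  have hlow := integral_add_integral_max_sub_le_integral_max (integrable_eval_gaussPosterior
    (μhat := μhat) (N := N) i) (integrable_eval_gaussPosterior k) c
  have hup := integral_max_le_max_add (integrable_eval_gaussPosterior (μhat := μhat)
    (N := N) j) (integrable_eval_gaussPosterior k) (μhat j) (μhat k)
  simp only [integral_eval_gaussPosterior, max_eq_right hjk] at hlow hup
  have := integral_max_sub_zero_gaussPosterior_le (μhat := μhat) (N := N) (le_refl (μhat j))
  have := integral_max_sub_zero_gaussPosterior_le (μhat := μhat) (N := N) (le_refl (μhat k))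
  have := integral_max_sub_zero_gaussPosterior_le (μhat := μhat) (N := N) hkc
  simp only [pairMaxMatrix, of_apply]
  linarith

theorem sub_le_iSup_sub_iInf {ι : Type*} [Finite ι] (f : ι → ℝ) (i j : ι) :
    f i - f j ≤ (⨆ k, f k) - ⨅ k, f k := by
  have := le_ciSup (Set.finite_range f).bddAbove i
  have := ciInf_le (Set.finite_range f).bddBelow j
  linarith

theorem le_sum_mul_pairMaxMatrix_gaussPosterior_sub {p : Fin K → ℝ} (hp : ∀ k, 0 ≤ p k)
    {S H : Finset (Fin K)} (hHS : H ⊆ S) {i j : Fin K} {c E : ℝ}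
    (hi : 4 * E ≤ ∫ θ, max (θ i - c) 0 ∂gaussPosterior K μhat N)
    (hsd : ∀ k ∈ S, √(N k : ℝ)⁻¹ ≤ E) (hSH : ∀ k ∈ S \ H, μhat k ≤ c)
    (hH : ∀ k ∈ H, c < μhat k) (hj : j ∈ S \ H)
    (hjmin : ∀ k ∈ S \ H, 0 < p k → μhat j ≤ μhat k) :
    -((⨆ k, μhat k) - (⨅ k, μhat k) + 1) * ∑ k ∈ univ \ S, p k + 5 / 2 * E * ∑ k ∈ S \ H, p k
        + -E * ∑ k ∈ H, p k ≤
      ∑ k, p k * (pairMaxMatrix (gaussPosterior K μhat N) i k -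
        pairMaxMatrix (gaussPosterior K μhat N) j k) := by
  have hjS := (mem_sdiff.1 hj).1
  have hsd_le_one : ∀ k, √(N k : ℝ)⁻¹ ≤ 1 := fun k => Real.sqrt_le_one.2 (Nat.cast_inv_le_one _)
  refine le_sum_mul_of_le_on_parts hHS hp (fun k hk hpk => ?_) (fun k hk => ?_) (fun k _ => ?_)
  · have := pairMaxMatrix_gaussPosterior_sub_ge_of_le_of_le (N := N) (i := i)
      (hjmin k hk hpk) (hSH k hk)
    linarith [hsd j hjS, hsd k (mem_sdiff.1 hk).1]
  · have := pairMaxMatrix_gaussPosterior_sub_ge (μhat := μhat) (N := N) i j k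
    rw [min_eq_right (by linarith [hSH j hj, hH k hk])] at this
    linarith [hsd j hjS, hsd k (hHS hk)]
  · have := pairMaxMatrix_gaussPosterior_sub_ge (μhat := μhat) (N := N) i j k
    have := sub_le_iSup_sub_iInf μhat j k
    have := sub_le_iSup_sub_iInf μhat j j
    have : -((⨆ k, μhat k) - ⨅ k, μhat k) ≤ min (μhat k - μhat j) 0 :=
      le_min (by linarith) (by linarith)
    linarith [hsd_le_one j, hsd_le_one k]

theorem div_le_sum_sdiff_of_isMaxOn_remaxJ2 {p : Fin K → ℝ} (hp : p ∈ stdSimplex ℝ (Fin K))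
    (hmax : IsMaxOn (remaxJ2 K μhat N) (stdSimplex ℝ (Fin K)) p)
    {S H : Finset (Fin K)} (hHS : H ⊆ S) {i : Fin K} {c E : ℝ} (hE : 0 < E)
    (hi : 4 * E ≤ ∫ θ, max (θ i - c) 0 ∂gaussPosterior K μhat N)
    (hsd : ∀ k ∈ S, √(N k : ℝ)⁻¹ ≤ E) (hSH : ∀ k ∈ S \ H, μhat k ≤ c)
    (hH : ∀ k ∈ H, c < μhat k) (hHmass : ∑ k ∈ H, p k < 1 / 4)
    (hSmass : ∑ k ∈ univ \ S, p k < 1 / 4) :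
    E / (2 * ((⨆ k, μhat k) - (⨅ k, μhat k) + 1)) ≤ ∑ k ∈ univ \ S, p k := by
  set G := pairMaxMatrix (gaussPosterior K μhat N)
  have hmass : 1 / 2 < ∑ k ∈ S \ H, p k := by
    have := sum_eq_sum_univ_sdiff_add_sum_sdiff_add_sum hHS p
    linarith [hp.2]
  obtain ⟨j, hj, hjmin⟩ := ((S \ H).filter (0 < p ·)).exists_min_image μhat <| by
    obtain ⟨k, hk, hne⟩ := exists_ne_zero_of_sum_ne_zero (hmass.trans' one_half_pos).ne'
    exact ⟨k, mem_filter.2 ⟨hk, (hp.1 k).lt_of_ne' hne⟩⟩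
  have hfo : (G *ᵥ p) i ≤ (G *ᵥ p) j :=
    (pairMaxMatrix_isSymm _).mulVec_apply_le_of_isMaxOn_stdSimplex hp
      (isMaxOn_iff.2 fun q hq => by
        simpa only [remaxJ2_eq_dotProduct_mulVec] using isMaxOn_iff.1 hmax q hq)
      i (mem_filter.1 hj).2
  have hsum : ∑ k, p k * (G i k - G j k) = (G *ᵥ p) i - (G *ᵥ p) j := by
    simp only [mulVec, dotProduct, mul_sub, sum_sub_distrib, mul_comm]
  have hgap := le_sum_mul_pairMaxMatrix_gaussPosterior_sub hp.1 hHS hi hsd hSH hH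
    (mem_filter.1 hj).1 fun k hk hpk => hjmin k (mem_filter.2 ⟨hk, hpk⟩)
  have hL := sub_le_iSup_sub_iInf μhat i i
  rw [div_le_iff₀ (by linarith)]
  nlinarith [mul_lt_mul_of_pos_left hmass hE, mul_lt_mul_of_pos_left hHmass hE]

end Posterior

theorem sqrt_inv_le_of_four_div_pi_mul_sq_le {E x : ℝ} (hE : 0 < E)
    (hx : 4 / (Real.pi * E ^ 2) ≤ x) : √x⁻¹ ≤ E := by
  calc √x⁻¹ ≤ √(E ^ 2) := Real.sqrt_le_sqrt <| calc
        x⁻¹ ≤ (4 / (Real.pi * E ^ 2))⁻¹ := inv_anti₀ (by positivity) hx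
        _ = Real.pi / 4 * E ^ 2 := by field_simp
        _ ≤ E ^ 2 := by nlinarith [Real.pi_le_four, sq_nonneg E]
    _ = E := Real.sqrt_sq hE.le

theorem freeze_lemma_general
    (K : ℕ)
    (μhat : Fin K → ℝ) (N : Fin K → ℕ)
    (π : Fin K → ℝ) (hπ0 : ∀ i, 0 ≤ π i) (hπ1 : ∑ i, π i = 1)
    (hmax : ∀ π' : Fin K → ℝ, (∀ i, 0 ≤ π' i) → (∑ i, π' i = 1) →
      remaxJ2 K μhat N π' ≤ remaxJ2 K μhat N π)
    (ε : ℝ) (μ₁ : ℝ) (n : ℕ) (hn : 1 ≤ n)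
    (i1 : Fin K)
    (hN1 : N i1 = n) :
    -- `E`: a quarter of the expected improvement of arm 1 over the threshold `μ₁ − ε`
    let E : ℝ := (1 / 4) * ∫ x, max (x - (μ₁ - ε)) 0 ∂(gaussianReal (μhat i1) ((n : ℝ≥0))⁻¹)
    -- `S`: the sufficiently sampled arms
    let S : Finset (Fin K) :=
      Finset.univ.filter fun i => max (4 / (Real.pi * E ^ 2)) ((n : ℝ) + 1) ≤ (N i : ℝ)
    -- `H`: sufficiently sampled non-optimal arms that still appear overly optimistic
    let H : Finset (Fin K) := S.filter fun i => i ≠ i1 ∧ μ₁ - ε < μhat i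
    -- `L`: the empirical-mean range
    let L : ℝ := (⨆ i, μhat i) - (⨅ i, μhat i)
    (∑ i ∈ H, π i) < 1 / 4 →
      min (1 / 4) (E / (2 * (L + 1))) ≤ ∑ j ∈ Finset.univ \ S, π j := by
  intro E S H L hH
  have hE : 0 < E := mul_pos (by norm_num)
    (integral_max_sub_zero_gaussianReal_pos (by simp; omega) _)
  have hi1S : i1 ∉ S := by simp [S, hN1]
  rcases le_or_gt (1 / 4) (∑ j ∈ univ \ S, π j) with hβ | hβ
  · exact min_le_of_left_le hβ
  refine min_le_of_right_le <| div_le_sum_sdiff_of_isMaxOn_remaxJ2 (i := i1) (c := μ₁ - ε)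
    ⟨hπ0, hπ1⟩ (fun q hq => hmax q hq.1 hq.2) (filter_subset _ _) hE ?_
    (fun k hk => sqrt_inv_le_of_four_div_pi_mul_sq_le hE (le_of_max_le_left (mem_filter.1 hk).2))
    (fun k hk => ?_) (fun k hk => (mem_filter.1 hk).2.2) hH hβ
  · rw [integral_comp_eval_gaussPosterior i1 (f := fun x => max (x - (μ₁ - ε)) 0) (by fun_prop),
      hN1]
    simp only [E]
    linarith
  · by_contra! hlt
    exact (mem_sdiff.1 hk).2 (mem_filter.2 ⟨(mem_sdiff.1 hk).1,
      ne_of_mem_of_not_mem (mem_sdiff.1 hk).1 hi1S, hlt⟩)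

/-- Freeze Lemma: if the optimal arm 1 is underestimated (`μ̂_1 ≤ μ₁ − ε`, with `N_1 = n`)
and the sufficiently-sampled-but-optimistic arms `H` carry probability mass less than
`1/4` under the ReMax-optimal distribution `π`, then the arms outside the sufficiently
sampled set `S` carry probability mass at least `min(1/4, E/(2(L+1)))`. -/
theorem freeze_lemma
    (K : ℕ) (hK : 2 ≤ K)
    (μhat : Fin K → ℝ) (N : Fin K → ℕ) (hN : ∀ i, 1 ≤ N i)
    (π : Fin K → ℝ) (hπ0 : ∀ i, 0 ≤ π i) (hπ1 : ∑ i, π i = 1)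
    (hmax : ∀ π' : Fin K → ℝ, (∀ i, 0 ≤ π' i) → (∑ i, π' i = 1) →
      remaxJ2 K μhat N π' ≤ remaxJ2 K μhat N π)
    (ε : ℝ) (hε : 0 < ε) (μ₁ : ℝ) (n : ℕ) (hn : 1 ≤ n)
    (i1 : Fin K) (hi1 : (i1 : ℕ) = 0)
    (hN1 : N i1 = n) (hunder : μhat i1 ≤ μ₁ - ε) :
    -- `E`: a quarter of the expected improvement of arm 1 over the threshold `μ₁ − ε`
    let E : ℝ := (1 / 4) * ∫ x, max (x - (μ₁ - ε)) 0 ∂(gaussianReal (μhat i1) ((n : ℝ≥0))⁻¹)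
    -- `S`: the sufficiently sampled arms
    let S : Finset (Fin K) :=
      Finset.univ.filter fun i => max (4 / (Real.pi * E ^ 2)) ((n : ℝ) + 1) ≤ (N i : ℝ)
    -- `H`: sufficiently sampled non-optimal arms that still appear overly optimistic
    let H : Finset (Fin K) := S.filter fun i => i ≠ i1 ∧ μ₁ - ε < μhat i
    -- `L`: the empirical-mean range
    let L : ℝ := (⨆ i, μhat i) - (⨅ i, μhat i)
    (∑ i ∈ H, π i) < 1 / 4 →
      min (1 / 4) (E / (2 * (L + 1))) ≤ ∑ j ∈ Finset.univ \ S, π j :=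
  freeze_lemma_general K μhat N π hπ0 hπ1 hmax ε μ₁ n hn i1 hN1
end

section
/- Let θ_1 and θ_j be independent Gaussian random variables with θ_1 ∼ N(μ̂_1, 1/N_1) and θ_j ∼ N(μ̂_j, 1/N_j), where N_1, N_j ≥ 1 and μ̂_1 ≥ μ̂_j. Then E[max(θ_j − θ_1, 0)] ≤ (1/√π) · exp( −(μ̂_1 − μ̂_j)² / ( 2·(1/N_1 + 1/N_j) ) ). -/
/-!
The difference `θ_j - θ_1` is Gaussian with mean `m = μ̂_j - μ̂_1 ≤ 0` and variance
`V = 1/N_1 + 1/N_j ≤ 2`. On `{x > 0}` we have `x ≤ x - m`, and `(x - m) · φ(x)` is the derivative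
of `-V · φ(x)` for the density `φ` of `N(m, V)`, so `E[max(X, 0)] ≤ V · φ(0) = √(V / 2π) · e^{-m²/2V}`,
and `√(V / 2π) ≤ 1/√π`.
-/

open MeasureTheory ProbabilityTheory
open scoped NNReal

namespace ProbabilityTheory
open Real Set Filter Topology

lemma map_sub_prod_gaussianReal (μ₁ μ₂ : ℝ) (v₁ v₂ : ℝ≥0) :
    ((gaussianReal μ₁ v₁).prod (gaussianReal μ₂ v₂)).map (fun p ↦ p.2 - p.1)
      = gaussianReal (μ₂ - μ₁) (v₁ + v₂) := by
  set P := (gaussianReal μ₁ v₁).prod (gaussianReal μ₂ v₂)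
  have hneg : P.map (fun p ↦ -p.1) = gaussianReal (-μ₁) v₁ := by
    change P.map ((fun x ↦ -x) ∘ Prod.fst) = _
    rw [← Measure.map_map measurable_neg measurable_fst, Measure.map_fst_prod, measure_univ,
      one_smul, gaussianReal_map_neg]
  have hsnd : P.map (fun p ↦ id p.2) = gaussianReal μ₂ v₂ := by
    simp [P]
  have h := gaussianReal_add_gaussianReal_of_indepFun
    (indepFun_prod measurable_neg measurable_id) hneg hsnd
  convert h using 2
  · ext p; simp [neg_add_eq_sub]
  · ring

lemma hasDerivAt_gaussianPDFReal (μ : ℝ) (v : ℝ≥0) (x : ℝ) :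
    HasDerivAt (gaussianPDFReal μ v) (-(x - μ) / v * gaussianPDFReal μ v x) x := by
  have hsq : HasDerivAt (fun x ↦ -(x - μ) ^ 2 / (2 * (v : ℝ))) (-(2 * (x - μ)) / (2 * v)) x := by
    simpa using (((hasDerivAt_id x).sub_const μ).pow 2).neg.div_const (2 * (v : ℝ))
  refine (hsq.exp.const_mul (√(2 * π * v))⁻¹).congr_deriv ?_
  simp only [gaussianPDFReal]
  ring

lemma tendsto_gaussianPDFReal_atTop (μ : ℝ) {v : ℝ≥0} (hv : v ≠ 0) :
    Tendsto (gaussianPDFReal μ v) atTop (𝓝 0) := by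
  have hsq : Tendsto (fun x : ℝ ↦ (x - μ) ^ 2) atTop atTop :=
    (tendsto_pow_atTop two_ne_zero).comp (tendsto_atTop_add_const_right _ _ tendsto_id)
  have hexponent : Tendsto (fun x : ℝ ↦ -(x - μ) ^ 2 / (2 * v)) atTop atBot :=
    (tendsto_neg_atTop_atBot.comp hsq).atBot_div_const (by positivity)
  have h := (tendsto_exp_atBot.comp hexponent).const_mul (√(2 * π * v))⁻¹
  rw [mul_zero] at h
  exact h

lemma integrable_sub_mul_gaussianPDFReal (μ : ℝ) {v : ℝ≥0} (hv : v ≠ 0) :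
    Integrable (fun x ↦ (x - μ) * gaussianPDFReal μ v x) := by
  have hb : 0 < (2 * (v : ℝ))⁻¹ := by positivity
  refine (((integrable_mul_exp_neg_mul_sq hb).comp_sub_right μ).const_mul
    (√(2 * π * v))⁻¹).congr (ae_of_all _ fun x ↦ ?_)
  simp only [gaussianPDFReal]
  ring_nf

lemma integral_Ioi_sub_mul_gaussianPDFReal (μ : ℝ) {v : ℝ≥0} (hv : v ≠ 0) (a : ℝ) :
    ∫ x in Ioi a, (x - μ) * gaussianPDFReal μ v x = v * gaussianPDFReal μ v a := by
  have hderiv (x : ℝ) : HasDerivAt (fun x ↦ -v * gaussianPDFReal μ v x)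
      ((x - μ) * gaussianPDFReal μ v x) x := by
    refine ((hasDerivAt_gaussianPDFReal μ v x).const_mul _).congr_deriv ?_
    field_simp
  have hlim : Tendsto (fun x ↦ -v * gaussianPDFReal μ v x) atTop (𝓝 0) := by
    simpa using (tendsto_gaussianPDFReal_atTop μ hv).const_mul (-(v : ℝ))
  rw [integral_Ioi_of_hasDerivAt_of_tendsto' (fun x _ ↦ hderiv x)
    (integrable_sub_mul_gaussianPDFReal μ hv).integrableOn hlim]
  ring

lemma integral_max_zero_gaussianReal_le {μ : ℝ} (hμ : μ ≤ 0) {v : ℝ≥0} (hv : v ≠ 0) :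
    ∫ x, max x 0 ∂gaussianReal μ v ≤ v * gaussianPDFReal μ v 0 := by
  rw [integral_gaussianReal_eq_integral_smul hv, ← integral_Ioi_sub_mul_gaussianPDFReal μ hv 0,
    ← integral_indicator measurableSet_Ioi]
  refine integral_mono_of_nonneg (ae_of_all _ fun x ↦ ?_)
    ((integrable_sub_mul_gaussianPDFReal μ hv).indicator measurableSet_Ioi)
    (ae_of_all _ fun x ↦ ?_)
  · exact smul_nonneg (gaussianPDFReal_nonneg μ v x) (le_max_right x 0)
  · have hpdf := gaussianPDFReal_nonneg μ v x
    rcases le_or_gt x 0 with hx | hx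
    · simp [hx]
    · show gaussianPDFReal μ v x * max x 0 ≤ _
      rw [Set.indicator_of_mem (show x ∈ Ioi 0 from hx), max_eq_left hx.le, mul_comm]
      exact mul_le_mul_of_nonneg_right (by linarith) hpdf

lemma mul_gaussianPDFReal_zero_le (μ : ℝ) {v : ℝ≥0} (hv : v ≤ 2) :
    v * gaussianPDFReal μ v 0 ≤ 1 / √π * exp (-μ ^ 2 / (2 * v)) := by
  have hcoef : v * (√(2 * π * v))⁻¹ ≤ 1 / √π := calc
    v * (√(2 * π * v))⁻¹ = √v * √v * (√v)⁻¹ * (√(2 * π))⁻¹ := by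
      nth_rewrite 1 [← mul_self_sqrt v.coe_nonneg]
      rw [sqrt_mul (by positivity), mul_inv]
      ring
    _ = √v / (√2 * √π) := by rw [mul_self_mul_inv, ← sqrt_mul zero_le_two, div_eq_mul_inv]
    _ ≤ √2 / (√2 * √π) := by gcongr; exact_mod_cast hv
    _ = 1 / √π := by field_simp
  simp only [gaussianPDFReal, zero_sub, neg_sq, ← mul_assoc]
  exact mul_le_mul_of_nonneg_right hcoef (exp_pos _).le

end ProbabilityTheory

/-- Upper bound on `G_{j,1}`: if `θ_1 ∼ N(μ̂_1, 1/N_1)` and `θ_j ∼ N(μ̂_j, 1/N_j)` are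
independent with `μ̂_1 ≥ μ̂_j`, then
`E[max(θ_j − θ_1, 0)] ≤ (1/√π) · exp(−(μ̂_1 − μ̂_j)²/(2(1/N_1 + 1/N_j)))`. -/
theorem Gj1_upper_bound
    (N1 Nj : ℕ) (hN1 : 1 ≤ N1) (hNj : 1 ≤ Nj)
    (μhat1 μhatj : ℝ) (h : μhatj ≤ μhat1) :
    ∫ p : ℝ × ℝ, max (p.2 - p.1) 0
        ∂((gaussianReal μhat1 ((N1 : ℝ≥0))⁻¹).prod (gaussianReal μhatj ((Nj : ℝ≥0))⁻¹))
      ≤ (1 / Real.sqrt Real.pi) *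
          Real.exp (-(μhat1 - μhatj) ^ 2 / (2 * (1 / (N1 : ℝ) + 1 / (Nj : ℝ)))) := by
  have hinv {N : ℕ} (hN : 1 ≤ N) : (N : ℝ≥0)⁻¹ ≤ 1 := inv_le_one_of_one_le₀ (by exact_mod_cast hN)
  have hV : (N1 : ℝ≥0)⁻¹ + (Nj : ℝ≥0)⁻¹ ≠ 0 := by positivity
  have hV2 : (N1 : ℝ≥0)⁻¹ + (Nj : ℝ≥0)⁻¹ ≤ 2 :=
    (add_le_add (hinv hN1) (hinv hNj)).trans_eq one_add_one_eq_two
  rw [← integral_map (φ := fun p : ℝ × ℝ ↦ p.2 - p.1) (f := fun x ↦ max x 0) (by fun_prop)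
    (by fun_prop), map_sub_prod_gaussianReal]
  calc _ ≤ _ := integral_max_zero_gaussianReal_le (sub_nonpos.2 h) hV
    _ ≤ _ := mul_gaussianPDFReal_zero_le _ hV2
    _ = _ := by push_cast; ring_nf
end
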